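/- For every $i\in\{0,\dots,c(n)-1\}$, the retraction $\phi_{n,i}:D_n\to M_{n,i}$ is $(2\lambda^2+4\lambda+4)$-Lipschitz. -/

import Mathlib

open Set

noncomputable section

variable {Γ : Type*} [TopologicalSpace Γ] [DiscreteTopology Γ]

/-- `ℓ∞(Γ)`: the Banach space of bounded real functions on `Γ`
(carrying the discrete topology, so that boundedness is the only constraint). -/
abbrev Linf (Γ : Type*) [TopologicalSpace Γ] [DiscreteTopology Γ] : Type _ :=
  BoundedContinuousFunction Γ ℝ

/-- The entire part of a real number, toward `0`: `[r] = sign(r)⌊|r|⌋`. -/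
def ent (r : ℝ) : ℝ := Real.sign r * ⌊|r|⌋

lemma abs_ent_le (r : ℝ) : |ent r| ≤ |r| := by
  have hsign : |Real.sign r| ≤ 1 := by
    rcases lt_trichotomy r 0 with h | h | h
    · rw [Real.sign_of_neg h]; norm_num
    · rw [h, Real.sign_zero]; norm_num
    · rw [Real.sign_of_pos h]; norm_num
  have hfl : |(⌊|r|⌋ : ℝ)| ≤ |r| := by
    rw [abs_of_nonneg (by exact_mod_cast Int.floor_nonneg.mpr (abs_nonneg r))]
    exact Int.floor_le _
  calc |ent r| = |Real.sign r| * |(⌊|r|⌋ : ℝ)| := abs_mul _ _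
    _ ≤ 1 * |r| := mul_le_mul hsign hfl (abs_nonneg _) zero_le_one
    _ = |r| := one_mul _

/-- The coordinatewise quantization `f : ℓ∞(S) → ℓ∞(S)`, `f(x)(γ) = [x(γ)]`. -/
def quant (x : Linf Γ) : Linf Γ :=
  BoundedContinuousFunction.ofNormedAddCommGroup (fun γ => ent (x γ))
    continuous_of_discreteTopology ‖x‖ (fun γ => by
      rw [Real.norm_eq_abs]
      exact (abs_ent_le (x γ)).trans (by simpa using x.norm_coe_le_norm γ))

/-- Scalar truncation at level `s`. -/
def truncFun (s t : ℝ) : ℝ := if |t| ≤ s then t else s * t / |t|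

lemma abs_truncFun_le (s t : ℝ) : |truncFun s t| ≤ max |s| |t| := by
  unfold truncFun
  split_ifs with h
  · exact le_max_right _ _
  · by_cases ht : t = 0
    · simp [ht]
    · have hst : abs (s * t / |t|) = |s| := by
        rw [abs_div, abs_mul, abs_abs, mul_div_assoc, div_self (abs_ne_zero.mpr ht), mul_one]
      rw [hst]; exact le_max_left _ _

/-- The truncation of radius `s`: `T_s(x)(γ) = x(γ)` if `|x(γ)| ≤ s`,
and `= s·x(γ)/|x(γ)|` otherwise. -/
def trunc (s : ℝ) (x : Linf Γ) : Linf Γ :=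
  BoundedContinuousFunction.ofNormedAddCommGroup (fun γ => truncFun s (x γ))
    continuous_of_discreteTopology (max |s| ‖x‖) (fun γ => by
      rw [Real.norm_eq_abs]
      exact (abs_truncFun_le s (x γ)).trans
        (max_le_max le_rfl (by simpa using x.norm_coe_le_norm γ)))

/-- The restriction operator `r_S : ℓ∞(Γ) → ℓ∞(S)`, where `ℓ∞(S)` is identified
isometrically with the subspace of `ℓ∞(Γ)` of functions vanishing off `S`. -/
def restr (S : Set Γ) (x : Linf Γ) : Linf Γ :=
  BoundedContinuousFunction.ofNormedAddCommGroup (S.indicator x)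
    continuous_of_discreteTopology ‖x‖ (fun γ => by
      rw [Real.norm_eq_abs]
      by_cases h : γ ∈ S
      · rw [Set.indicator_of_mem h]
        simpa using x.norm_coe_le_norm γ
      · rw [Set.indicator_of_notMem h]
        simp)

/-- The ball `s·B_{ℓ∞(S)}`, viewed inside `ℓ∞(Γ)`: functions supported on `S`
of norm at most `s`. -/
def suppBall (S : Set Γ) (s : ℝ) : Set (Linf Γ) :=
  {x | (∀ γ ∉ S, x γ = 0) ∧ ‖x‖ ≤ s}

/-- `chain T a b = T (a+1) ∘ ⋯ ∘ T b` (the identity if `b ≤ a`). -/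
def chain {α : Type*} (T : ℕ → α → α) (a b : ℕ) : α → α :=
  Nat.rec id (fun k ih => ih ∘ T (a + k + 1)) (b - a)

/-- Bourgain–Delbaen data on `Γ`: a strictly increasing sequence of nonempty finite
sets `Γs n` (for `n ≥ 1`) with union `Γ`, together with compatible bounded linear
extension operators `i n : ℓ∞(Γ_n) → ℓ∞(Γ)` (realized as operators on `ℓ∞(Γ)`
factoring through the restriction `restr (Γs n)`), with norms bounded by the
positive integer `lam`. -/
structure BD (Γ : Type*) [TopologicalSpace Γ] [DiscreteTopology Γ] where
  Γs : ℕ → Set Γ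
  lam : ℕ
  i : ℕ → Linf Γ →L[ℝ] Linf Γ
  one_le_lam : 1 ≤ lam
  finite : ∀ n, 1 ≤ n → (Γs n).Finite
  nonempty : ∀ n, 1 ≤ n → (Γs n).Nonempty
  ssubset : ∀ n, 1 ≤ n → Γs n ⊂ Γs (n + 1)
  iUnion_eq : ⋃ n ∈ {k : ℕ | 1 ≤ k}, Γs n = Set.univ
  extension : ∀ n, 1 ≤ n → ∀ x : Linf Γ, ∀ γ ∈ Γs n, i n x γ = x γ
  factor : ∀ n, 1 ≤ n → ∀ x : Linf Γ, i n (restr (Γs n) x) = i n x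
  compatible : ∀ n m, 1 ≤ n → n < m → ∀ x : Linf Γ, i m (restr (Γs m) (i n x)) = i n x
  norm_i_le : ∀ n, 1 ≤ n → ‖i n‖ ≤ (lam : ℝ)

namespace BD

/-- `s n = λ^n`. -/
def s (B : BD Γ) (n : ℕ) : ℝ := (B.lam : ℝ) ^ n

/-- The sets `M_n` (with `M_0 = ∅`):
`M_n = M_{n-1} ∪ (f ∘ i_n)(f(s_n B_{ℓ∞(Γ_n)}) \ r_n(M_{n-1}))`. -/
def M (B : BD Γ) : ℕ → Set (Linf Γ)
  | 0 => ∅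
  | n + 1 =>
      M B n ∪
        (fun z => quant (B.i (n + 1) z)) ''
          (quant '' suppBall (B.Γs (n + 1)) (B.s (n + 1)) \ restr (B.Γs (n + 1)) '' M B n)

/-- `M = ⋃ n, M_n`. -/
def Mtot (B : BD Γ) : Set (Linf Γ) := ⋃ n, B.M n

/-- `C_n = (f ∘ i_{n+1} ∘ f ∘ T_{s_{n+1}} ∘ r_{n+1} ∘ i_n)
(f(s_{n+1}B_{ℓ∞(Γ_n)}) \ f(s_n B_{ℓ∞(Γ_n)}))`. -/
def C (B : BD Γ) (n : ℕ) : Set (Linf Γ) :=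
  (fun z => quant (B.i (n + 1) (quant (trunc (B.s (n + 1)) (restr (B.Γs (n + 1)) (B.i n z)))))) ''
    (quant '' suppBall (B.Γs n) (B.s (n + 1)) \ quant '' suppBall (B.Γs n) (B.s n))

/-- `D_n = M_n ∪ C_n`. -/
def D (B : BD Γ) (n : ℕ) : Set (Linf Γ) := B.M n ∪ B.C n

end BD

/-!
Points of `D_n` are integer valued, so distinct points are at distance at least `1`, and on
`D_n` the distance is controlled by the distance on `Γ_n` up to an additive constant:
`‖z - z'‖ ≤ λ² ‖r_n z - r_n z'‖ + (λ² + λ + 2)`. Along `T_N, …, T_{i+1}` the restriction of a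
point to `Γ_n` is only ever truncated, so `r_n (φ_{n,i} z)` is the truncation of `r_n z` at a
level `ε` that equals `‖r_n z‖` when this is at most `‖r_n c_{i+1}‖ - 1` and lies in
`[‖r_n c_{i+1}‖ - 1, ‖r_n c_{i+1}‖]` otherwise. The levels of `x` and `y` therefore differ by at
most `max ‖r_n x - r_n y‖ 1 ≤ ‖x - y‖`, whence `‖r_n φ x - r_n φ y‖ ≤ ‖x - y‖`, and the additive
constant is absorbed using `1 ≤ ‖x - y‖`.
-/

lemma ent_intCast (k : ℤ) : ent k = k := by
  rw [ent, Real.sign_intCast, ← Int.cast_abs, Int.floor_intCast, ← Int.cast_mul,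
    Int.sign_mul_abs]

lemma ent_zero : ent 0 = 0 := by simp [ent]

lemma exists_intCast_eq_ent (t : ℝ) : ∃ k : ℤ, (k : ℝ) = ent t := by
  rcases Real.sign_apply_eq t with h | h | h <;> rw [ent, h]
  · exact ⟨-⌊|t|⌋, by push_cast; ring⟩
  · exact ⟨0, by simp⟩
  · exact ⟨⌊|t|⌋, by ring⟩

lemma ent_ent (t : ℝ) : ent (ent t) = ent t := by
  obtain ⟨k, hk⟩ := exists_intCast_eq_ent t
  rw [← hk, ent_intCast]

lemma abs_ent_sub_self_le (t : ℝ) : |ent t - t| ≤ 1 := by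
  have h₁ := Int.floor_le |t|
  have h₂ := Int.sub_one_lt_floor |t|
  rcases lt_trichotomy t 0 with h | rfl | h
  · rw [ent, Real.sign_of_neg h, abs_of_neg h] at *
    rw [abs_le]; constructor <;> linarith
  · simp [ent]
  · rw [ent, Real.sign_of_pos h, abs_of_pos h] at *
    rw [abs_le]; constructor <;> linarith

lemma truncFun_eq_max_min {s : ℝ} (hs : 0 ≤ s) (t : ℝ) :
    truncFun s t = max (-s) (min s t) := by
  unfold truncFun
  split_ifs with h
  · rw [abs_le] at h
    rw [min_eq_right h.2, max_eq_right h.1]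
  · rcases le_or_gt 0 t with ht | ht
    · rw [abs_of_nonneg ht] at h ⊢
      rw [mul_div_assoc, div_self (by linarith), mul_one, min_eq_left (by linarith),
        max_eq_right (by linarith)]
    · rw [abs_of_neg ht] at h ⊢
      rw [div_neg, mul_div_assoc, div_self ht.ne, mul_one, min_eq_right (by linarith),
        max_eq_left (by linarith)]

lemma truncFun_truncFun {s t : ℝ} (hs : 0 ≤ s) (ht : 0 ≤ t) (x : ℝ) :
    truncFun s (truncFun t x) = truncFun (min s t) x := by
  rw [truncFun_eq_max_min hs, truncFun_eq_max_min ht, truncFun_eq_max_min (le_min hs ht)]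
  grind

lemma abs_truncFun_sub_truncFun_le {s t : ℝ} (hs : 0 ≤ s) (ht : 0 ≤ t) (a b : ℝ) :
    |truncFun s a - truncFun t b| ≤ max |a - b| |s - t| := by
  rw [truncFun_eq_max_min hs, truncFun_eq_max_min ht]
  grind

lemma abs_truncFun_le_min {s : ℝ} (hs : 0 ≤ s) (t : ℝ) : |truncFun s t| ≤ min s |t| := by
  rw [truncFun_eq_max_min hs]
  grind

lemma abs_truncFun_of_lt_abs {s t : ℝ} (hs : 0 ≤ s) (h : s < |t|) : |truncFun s t| = s := by
  rw [truncFun_eq_max_min hs]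
  grind

lemma abs_sub_le_max_one_of_min_le {L p q u v : ℝ} (hu : min (L - 1) p ≤ u)
    (hu' : u ≤ min L p) (hv : min (L - 1) q ≤ v) (hv' : v ≤ min L q) :
    |u - v| ≤ max |p - q| 1 := by
  grind

lemma quant_apply (x : Linf Γ) (γ : Γ) : quant x γ = ent (x γ) := rfl

lemma trunc_apply (s : ℝ) (x : Linf Γ) (γ : Γ) : trunc s x γ = truncFun s (x γ) := rfl

lemma restr_apply_of_mem {S : Set Γ} {γ : Γ} (h : γ ∈ S) (x : Linf Γ) :
    restr S x γ = x γ :=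
  Set.indicator_of_mem h x

lemma restr_apply_of_notMem {S : Set Γ} {γ : Γ} (h : γ ∉ S) (x : Linf Γ) :
    restr S x γ = 0 :=
  Set.indicator_of_notMem h x

lemma norm_le_of_forall_abs_le {x : Linf Γ} {C : ℝ} (hC : 0 ≤ C) (h : ∀ γ, |x γ| ≤ C) :
    ‖x‖ ≤ C :=
  (BoundedContinuousFunction.norm_le hC).2 h

lemma abs_apply_le_norm (x : Linf Γ) (γ : Γ) : |x γ| ≤ ‖x‖ :=
  x.norm_coe_le_norm γ

lemma norm_quant_le (x : Linf Γ) : ‖quant x‖ ≤ ‖x‖ :=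
  norm_le_of_forall_abs_le (norm_nonneg x) fun γ =>
    (abs_ent_le _).trans (abs_apply_le_norm x γ)

lemma norm_quant_sub_self_le (x : Linf Γ) : ‖quant x - x‖ ≤ 1 :=
  norm_le_of_forall_abs_le zero_le_one fun γ => abs_ent_sub_self_le (x γ)

lemma norm_quant_sub_quant_le (x y : Linf Γ) : ‖quant x - quant y‖ ≤ ‖x - y‖ + 2 := by
  have hx := norm_quant_sub_self_le x
  have hy := norm_quant_sub_self_le y
  rw [← dist_eq_norm] at hx hy ⊢
  linarith [dist_triangle4 (quant x) x y (quant y), dist_comm y (quant y), dist_eq_norm x y]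

lemma norm_sub_le_norm_quant_sub_quant (x y : Linf Γ) : ‖x - y‖ ≤ ‖quant x - quant y‖ + 2 := by
  have hx := norm_quant_sub_self_le x
  have hy := norm_quant_sub_self_le y
  rw [← dist_eq_norm] at hx hy ⊢
  linarith [dist_triangle4 x (quant x) (quant y) y, dist_comm x (quant x),
    dist_eq_norm (quant x) (quant y)]

lemma quant_quant (x : Linf Γ) : quant (quant x) = quant x := by
  ext γ
  exact ent_ent (x γ)

lemma one_le_norm_quant_sub_quant {x y : Linf Γ} (h : quant x ≠ quant y) :
    1 ≤ ‖quant x - quant y‖ := by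
  obtain ⟨γ, hγ⟩ : ∃ γ, quant x γ ≠ quant y γ := by
    by_contra! h'
    exact h (BoundedContinuousFunction.ext h')
  obtain ⟨k, hk⟩ := exists_intCast_eq_ent (x γ)
  obtain ⟨l, hl⟩ := exists_intCast_eq_ent (y γ)
  rw [quant_apply, quant_apply, ← hk, ← hl, Ne, Int.cast_inj] at hγ
  calc (1 : ℝ) ≤ |((k - l : ℤ) : ℝ)| := by exact_mod_cast Int.one_le_abs (sub_ne_zero.mpr hγ)
    _ = |(quant x - quant y) γ| := by
      rw [BoundedContinuousFunction.sub_apply, quant_apply, quant_apply, ← hk, ← hl, Int.cast_sub]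
    _ ≤ ‖quant x - quant y‖ := abs_apply_le_norm _ γ

lemma restr_sub (S : Set Γ) (x y : Linf Γ) : restr S (x - y) = restr S x - restr S y := by
  ext γ
  exact congrFun (Set.indicator_sub S x y) γ

lemma norm_restr_le (S : Set Γ) (x : Linf Γ) : ‖restr S x‖ ≤ ‖x‖ :=
  norm_le_of_forall_abs_le (norm_nonneg x) fun γ => by
    by_cases h : γ ∈ S
    · rw [restr_apply_of_mem h]
      exact abs_apply_le_norm x γ
    · rw [restr_apply_of_notMem h, abs_zero]
      exact norm_nonneg x

lemma norm_restr_sub_restr_le (S : Set Γ) (x y : Linf Γ) :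
    ‖restr S x - restr S y‖ ≤ ‖x - y‖ := by
  rw [← restr_sub]
  exact norm_restr_le S (x - y)

lemma restr_eq_self {S : Set Γ} {x : Linf Γ} (h : ∀ γ ∉ S, x γ = 0) : restr S x = x := by
  ext γ
  by_cases hγ : γ ∈ S
  · exact restr_apply_of_mem hγ x
  · rw [restr_apply_of_notMem hγ, h γ hγ]

lemma restr_quant (S : Set Γ) (x : Linf Γ) : restr S (quant x) = quant (restr S x) := by
  ext γ
  by_cases hγ : γ ∈ S
  · rw [restr_apply_of_mem hγ, quant_apply, quant_apply, restr_apply_of_mem hγ]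
  · rw [restr_apply_of_notMem hγ, quant_apply, restr_apply_of_notMem hγ, ent_zero]

lemma trunc_eq_self {s : ℝ} {x : Linf Γ} (h : ‖x‖ ≤ s) : trunc s x = x := by
  ext γ
  exact if_pos ((abs_apply_le_norm x γ).trans h)

lemma trunc_trunc {s t : ℝ} (hs : 0 ≤ s) (ht : 0 ≤ t) (x : Linf Γ) :
    trunc s (trunc t x) = trunc (min s t) x := by
  ext γ
  exact truncFun_truncFun hs ht (x γ)

lemma norm_trunc {e : ℝ} (he : 0 ≤ e) (x : Linf Γ) : ‖trunc e x‖ = min e ‖x‖ := by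
  refine le_antisymm (norm_le_of_forall_abs_le (le_min he (norm_nonneg x)) fun γ =>
    (abs_truncFun_le_min he _).trans (min_le_min le_rfl (abs_apply_le_norm x γ))) ?_
  rcases le_or_gt ‖x‖ e with h | h
  · rw [min_eq_right h, trunc_eq_self h]
  · rw [min_eq_left h.le]
    obtain ⟨γ, hγ⟩ : ∃ γ, e < |x γ| := by
      by_contra! h'
      exact (norm_le_of_forall_abs_le he h').not_gt h
    have := abs_apply_le_norm (trunc e x) γ
    rwa [trunc_apply, abs_truncFun_of_lt_abs he hγ] at this

lemma trunc_norm_trunc {e : ℝ} (he : 0 ≤ e) (x : Linf Γ) :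
    trunc ‖trunc e x‖ x = trunc e x := by
  rw [norm_trunc he]
  rcases le_total e ‖x‖ with h | h
  · rw [min_eq_left h]
  · rw [min_eq_right h, trunc_eq_self le_rfl, trunc_eq_self h]

lemma norm_trunc_sub_trunc_le_max {s t : ℝ} (hs : 0 ≤ s) (ht : 0 ≤ t) (x y : Linf Γ) :
    ‖trunc s x - trunc t y‖ ≤ max ‖x - y‖ |s - t| :=
  norm_le_of_forall_abs_le (le_max_of_le_left (norm_nonneg _)) fun γ =>
    (abs_truncFun_sub_truncFun_le hs ht _ _).trans
      (max_le_max (abs_apply_le_norm (x - y) γ) le_rfl)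

lemma norm_trunc_sub_trunc_le {s : ℝ} (hs : 0 ≤ s) (x y : Linf Γ) :
    ‖trunc s x - trunc s y‖ ≤ ‖x - y‖ := by
  simpa using norm_trunc_sub_trunc_le_max hs hs x y

lemma quant_mem_suppBall {S : Set Γ} {s : ℝ} {x : Linf Γ} (hx : x ∈ suppBall S s) :
    quant x ∈ suppBall S s :=
  ⟨fun γ hγ => by rw [quant_apply, hx.1 γ hγ, ent_zero], (norm_quant_le x).trans hx.2⟩

namespace BD

variable (B : BD Γ)

lemma one_le_lam_real : (1 : ℝ) ≤ B.lam := by exact_mod_cast B.one_le_lam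

lemma one_le_s (m : ℕ) : 1 ≤ B.s m := one_le_pow₀ B.one_le_lam_real

lemma s_succ (m : ℕ) : B.s (m + 1) = B.lam * B.s m := pow_succ' _ _

lemma s_mono {m m' : ℕ} (h : m ≤ m') : B.s m ≤ B.s m' := pow_le_pow_right₀ B.one_le_lam_real h

lemma norm_i_apply_le {m : ℕ} (hm : 1 ≤ m) (v : Linf Γ) : ‖B.i m v‖ ≤ B.lam * ‖v‖ :=
  ((B.i m).le_opNorm v).trans (mul_le_mul_of_nonneg_right (B.norm_i_le m hm) (norm_nonneg v))

lemma norm_i_sub_i_le {m : ℕ} (hm : 1 ≤ m) (u v : Linf Γ) :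
    ‖B.i m u - B.i m v‖ ≤ B.lam * ‖u - v‖ := by
  rw [← map_sub]
  exact B.norm_i_apply_le hm _

lemma norm_quant_i_sub_quant_i_le {m : ℕ} (hm : 1 ≤ m) (u v : Linf Γ) :
    ‖quant (B.i m u) - quant (B.i m v)‖ ≤ B.lam * ‖u - v‖ + 2 :=
  (norm_quant_sub_quant_le _ _).trans (by gcongr; exact B.norm_i_sub_i_le hm u v)

lemma restr_i {m : ℕ} (hm : 1 ≤ m) (v : Linf Γ) :
    restr (B.Γs m) (B.i m v) = restr (B.Γs m) v := by
  ext γ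
  by_cases hγ : γ ∈ B.Γs m
  · rw [restr_apply_of_mem hγ, restr_apply_of_mem hγ, B.extension m hm v γ hγ]
  · rw [restr_apply_of_notMem hγ, restr_apply_of_notMem hγ]

lemma exists_mem_suppBall_i_eq {m n : ℕ} (hm : 1 ≤ m) (hmn : m ≤ n) {v : Linf Γ}
    (hv : v ∈ suppBall (B.Γs m) (B.s m)) :
    ∃ a ∈ suppBall (B.Γs n) (B.s n), B.i n a = B.i m v := by
  rcases hmn.eq_or_lt with rfl | hlt
  · exact ⟨v, hv, rfl⟩
  refine ⟨restr (B.Γs n) (B.i m v), ⟨fun γ hγ => restr_apply_of_notMem hγ _, ?_⟩,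
    B.compatible m n hm hlt v⟩
  calc ‖restr (B.Γs n) (B.i m v)‖ ≤ ‖B.i m v‖ := norm_restr_le _ _
    _ ≤ B.lam * B.s m := (B.norm_i_apply_le hm v).trans (by gcongr; exact hv.2)
    _ = B.s (m + 1) := (B.s_succ m).symm
    _ ≤ B.s n := B.s_mono hlt

lemma M_subset_image_i {m n : ℕ} (hmn : m ≤ n) :
    B.M m ⊆ (fun a => quant (B.i n a)) '' suppBall (B.Γs n) (B.s n) := by
  induction m with
  | zero => exact empty_subset _
  | succ m ih =>
    rintro z (hz | ⟨v, ⟨⟨w, hw, rfl⟩, -⟩, rfl⟩)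
    · exact ih (by omega) hz
    · obtain ⟨a, ha, hia⟩ :=
        B.exists_mem_suppBall_i_eq (by omega) hmn (quant_mem_suppBall hw)
      exact ⟨a, ha, congrArg quant hia⟩

lemma exists_of_mem_M {n : ℕ} (hn : 1 ≤ n) {z : Linf Γ} (hz : z ∈ B.M n) :
    ∃ a ∈ suppBall (B.Γs n) (B.s n), z = quant (B.i n a) ∧ restr (B.Γs n) z = quant a := by
  obtain ⟨a, ha, rfl⟩ := B.M_subset_image_i le_rfl hz
  exact ⟨a, ha, rfl, by rw [restr_quant, B.restr_i hn, restr_eq_self ha.1]⟩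

lemma norm_restr_le_s_of_mem_M {n : ℕ} (hn : 1 ≤ n) {z : Linf Γ} (hz : z ∈ B.M n) :
    ‖restr (B.Γs n) z‖ ≤ B.s n := by
  obtain ⟨a, ha, -, hza⟩ := B.exists_of_mem_M hn hz
  rw [hza]
  exact (norm_quant_le a).trans ha.2

def cMap (n : ℕ) (v : Linf Γ) : Linf Γ :=
  quant (B.i (n + 1) (quant (trunc (B.s (n + 1)) (restr (B.Γs (n + 1)) (B.i n v)))))

lemma C_eq (n : ℕ) : B.C n = B.cMap n ''
    (quant '' suppBall (B.Γs n) (B.s (n + 1)) \ quant '' suppBall (B.Γs n) (B.s n)) :=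
  rfl

lemma restr_cMap {n : ℕ} (hn : 1 ≤ n) {w : Linf Γ} (hw : w ∈ suppBall (B.Γs n) (B.s (n + 1))) :
    restr (B.Γs n) (B.cMap n (quant w)) = quant w := by
  ext γ
  by_cases hγ : γ ∈ B.Γs n
  · have hγ' : γ ∈ B.Γs (n + 1) := (B.ssubset n hn).subset hγ
    have hs : |quant w γ| ≤ B.s (n + 1) :=
      (abs_apply_le_norm _ γ).trans (quant_mem_suppBall hw).2
    rw [restr_apply_of_mem hγ, cMap, quant_apply, B.extension (n + 1) (by omega) _ γ hγ',
      quant_apply, trunc_apply, restr_apply_of_mem hγ', B.extension n hn _ γ hγ,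
      truncFun, if_pos hs, quant_apply, ent_ent, ent_ent]
  · rw [restr_apply_of_notMem hγ, (quant_mem_suppBall hw).1 γ hγ]

lemma eq_cMap_restr_of_mem_C {n : ℕ} (hn : 1 ≤ n) {z : Linf Γ} (hz : z ∈ B.C n) :
    z = B.cMap n (restr (B.Γs n) z) ∧ B.s n < ‖restr (B.Γs n) z‖ := by
  rw [C_eq] at hz
  obtain ⟨_, ⟨⟨w, hw, rfl⟩, hns⟩, rfl⟩ := hz
  rw [B.restr_cMap hn hw]
  exact ⟨rfl, lt_of_not_ge fun hle =>
    hns ⟨quant w, ⟨(quant_mem_suppBall hw).1, hle⟩, quant_quant w⟩⟩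

lemma D_subset_range_quant {n : ℕ} (hn : 1 ≤ n) : B.D n ⊆ range quant := by
  rintro z (hz | hz)
  · obtain ⟨a, -, rfl, -⟩ := B.exists_of_mem_M hn hz
    exact ⟨_, rfl⟩
  · rw [(B.eq_cMap_restr_of_mem_C hn hz).1]
    exact ⟨_, rfl⟩

lemma norm_sub_le_of_mem_M_of_mem_M {n : ℕ} (hn : 1 ≤ n) {z z' : Linf Γ} (hz : z ∈ B.M n)
    (hz' : z' ∈ B.M n) :
    ‖z - z'‖ ≤ B.lam * ‖restr (B.Γs n) z - restr (B.Γs n) z'‖ + (2 * B.lam + 2) := by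
  obtain ⟨a, -, rfl, hra⟩ := B.exists_of_mem_M hn hz
  obtain ⟨a', -, rfl, hra'⟩ := B.exists_of_mem_M hn hz'
  rw [hra, hra']
  calc ‖quant (B.i n a) - quant (B.i n a')‖ ≤ B.lam * ‖a - a'‖ + 2 :=
        B.norm_quant_i_sub_quant_i_le hn a a'
    _ ≤ B.lam * (‖quant a - quant a'‖ + 2) + 2 := by
        gcongr; exact norm_sub_le_norm_quant_sub_quant a a'
    _ = _ := by ring

lemma norm_trunc_restr_i_sub_le {n : ℕ} (hn : 1 ≤ n) (v v' : Linf Γ) :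
    ‖trunc (B.s (n + 1)) (restr (B.Γs (n + 1)) (B.i n v)) -
      trunc (B.s (n + 1)) (restr (B.Γs (n + 1)) (B.i n v'))‖ ≤ B.lam * ‖v - v'‖ :=
  (norm_trunc_sub_trunc_le (zero_le_one.trans (B.one_le_s _)) _ _).trans <|
    (norm_restr_sub_restr_le _ _ _).trans (B.norm_i_sub_i_le hn v v')

lemma norm_cMap_sub_cMap_le {n : ℕ} (hn : 1 ≤ n) (v v' : Linf Γ) :
    ‖B.cMap n v - B.cMap n v'‖ ≤ B.lam ^ 2 * ‖v - v'‖ + (2 * B.lam + 2) :=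
  calc ‖B.cMap n v - B.cMap n v'‖
      ≤ B.lam * (‖trunc (B.s (n + 1)) (restr (B.Γs (n + 1)) (B.i n v)) -
          trunc (B.s (n + 1)) (restr (B.Γs (n + 1)) (B.i n v'))‖ + 2) + 2 := by
        refine (B.norm_quant_i_sub_quant_i_le (by omega) _ _).trans ?_
        gcongr
        exact norm_quant_sub_quant_le _ _
    _ ≤ B.lam * (B.lam * ‖v - v'‖ + 2) + 2 := by
        gcongr
        exact B.norm_trunc_restr_i_sub_le hn v v'
    _ = _ := by ring

lemma norm_sub_le_of_mem_M_of_mem_C {n : ℕ} (hn : 1 ≤ n) {z z' : Linf Γ} (hz : z ∈ B.M n)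
    (hz' : z' ∈ B.C n) :
    ‖z - z'‖ ≤ B.lam ^ 2 * ‖restr (B.Γs n) z - restr (B.Γs n) z'‖ + (B.lam ^ 2 + B.lam + 2) := by
  obtain ⟨a, ha, rfl, hra⟩ := B.exists_of_mem_M hn hz
  have hz'_eq := (B.eq_cMap_restr_of_mem_C hn hz').1
  rw [hra]
  generalize restr (B.Γs n) z' = v' at hz'_eq ⊢
  subst hz'_eq
  set b := trunc (B.s (n + 1)) (restr (B.Γs (n + 1)) (B.i n a))
  set t' := trunc (B.s (n + 1)) (restr (B.Γs (n + 1)) (B.i n v'))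
  -- `a` lies in `s_n B`, so `r_{n+1} (i_n a)` is fixed by the truncation at `s_{n+1} = λ s_n`
  have hb : b = restr (B.Γs (n + 1)) (B.i n a) := by
    refine trunc_eq_self ((norm_restr_le _ _).trans ((B.norm_i_apply_le hn a).trans ?_))
    rw [B.s_succ]
    gcongr
    exact ha.2
  have hia : B.i n a = B.i (n + 1) b := by
    rw [hb, B.compatible n (n + 1) hn (by omega)]
  have hbt : ‖b - quant t'‖ ≤ B.lam * ‖a - v'‖ + 1 := by
    calc ‖b - quant t'‖ ≤ ‖b - t'‖ + ‖t' - quant t'‖ := norm_sub_le_norm_sub_add_norm_sub _ _ _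
      _ ≤ B.lam * ‖a - v'‖ + 1 := by
        rw [norm_sub_rev t']
        exact add_le_add (B.norm_trunc_restr_i_sub_le hn a v') (norm_quant_sub_self_le t')
  have hav : ‖a - v'‖ ≤ ‖quant a - v'‖ + 1 := by
    calc ‖a - v'‖ ≤ ‖a - quant a‖ + ‖quant a - v'‖ := norm_sub_le_norm_sub_add_norm_sub _ _ _
      _ ≤ ‖quant a - v'‖ + 1 := by
        rw [norm_sub_rev a, add_comm]
        exact add_le_add_right (norm_quant_sub_self_le a) _
  calc ‖quant (B.i n a) - B.cMap n v'‖
        = ‖quant (B.i (n + 1) b) - quant (B.i (n + 1) (quant t'))‖ := by rw [hia]; rfl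
    _ ≤ B.lam * ‖b - quant t'‖ + 2 := B.norm_quant_i_sub_quant_i_le (by omega) _ _
    _ ≤ B.lam * (B.lam * (‖quant a - v'‖ + 1) + 1) + 2 := by gcongr; exact hbt.trans (by gcongr)
    _ = _ := by ring

lemma norm_sub_le_of_mem_C_of_mem_C {n : ℕ} (hn : 1 ≤ n) {z z' : Linf Γ} (hz : z ∈ B.C n)
    (hz' : z' ∈ B.C n) :
    ‖z - z'‖ ≤ B.lam ^ 2 * ‖restr (B.Γs n) z - restr (B.Γs n) z'‖ + (2 * B.lam + 2) := by
  calc ‖z - z'‖ = ‖B.cMap n (restr (B.Γs n) z) - B.cMap n (restr (B.Γs n) z')‖ := by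
        rw [← (B.eq_cMap_restr_of_mem_C hn hz).1, ← (B.eq_cMap_restr_of_mem_C hn hz').1]
    _ ≤ _ := B.norm_cMap_sub_cMap_le hn _ _

lemma norm_sub_le_of_mem_D {n : ℕ} (hn : 1 ≤ n) {z z' : Linf Γ} (hz : z ∈ B.D n)
    (hz' : z' ∈ B.D n) :
    ‖z - z'‖ ≤ B.lam ^ 2 * ‖restr (B.Γs n) z - restr (B.Γs n) z'‖ + (B.lam ^ 2 + B.lam + 2) := by
  have hlam := B.one_le_lam_real
  have hd := norm_nonneg (restr (B.Γs n) z - restr (B.Γs n) z')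
  have hlam_sq : (B.lam : ℝ) ≤ B.lam ^ 2 := by nlinarith
  rcases hz with hz | hz <;> rcases hz' with hz' | hz'
  · nlinarith [B.norm_sub_le_of_mem_M_of_mem_M hn hz hz']
  · exact B.norm_sub_le_of_mem_M_of_mem_C hn hz hz'
  · rw [norm_sub_rev, norm_sub_rev (restr _ z)]
    exact B.norm_sub_le_of_mem_M_of_mem_C hn hz' hz
  · nlinarith [B.norm_sub_le_of_mem_C_of_mem_C hn hz hz']

end BD

section Chain

variable {α : Type*} (T : ℕ → α → α)

lemma chain_self (a : ℕ) : chain T a a = id := by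
  rw [chain, Nat.sub_self]
  rfl

lemma chain_succ {a b : ℕ} (h : a ≤ b) : chain T a (b + 1) = chain T a b ∘ T (b + 1) := by
  rw [chain, chain, Nat.succ_sub h]
  show _ ∘ T (a + (b - a) + 1) = _
  rw [Nat.add_sub_cancel' h]

lemma chain_eq_comp {a b : ℕ} (h : a < b) : chain T a b = T (a + 1) ∘ chain T (a + 1) b := by
  induction b with
  | zero => omega
  | succ b ih =>
    rcases (Nat.lt_succ_iff.mp h).eq_or_lt with rfl | hlt
    · rw [chain_succ T le_rfl, chain_self, chain_self]
      rfl
    · rw [chain_succ T hlt.le, ih hlt, chain_succ T hlt]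
      rfl

end Chain

namespace BD

/-- `M_{n,j} = M_n ∪ {c_1, …, c_j}`. -/
def Mi (B : BD Γ) (n : ℕ) (c : ℕ → Linf Γ) (j : ℕ) : Set (Linf Γ) := B.M n ∪ c '' Icc 1 j

lemma Mi_mono (B : BD Γ) (n : ℕ) (c : ℕ → Linf Γ) {a b : ℕ} (h : a ≤ b) :
    B.Mi n c a ⊆ B.Mi n c b :=
  union_subset_union_right _ (image_mono (Icc_subset_Icc le_rfl h))

/-- An enumeration `c_1, …, c_N` of `C_n` by increasing norm on `Γ_n`, with one-step
retractions `T j = T_{n,j} : M_{n,j} → M_{n,j-1}`. -/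
structure IsRetractionSeq (B : BD Γ) (n N : ℕ) (c : ℕ → Linf Γ) (T : ℕ → Linf Γ → Linf Γ) :
    Prop where
  image_eq : c '' Icc 1 N = B.C n
  norm_restr_mono : ∀ i j, 1 ≤ i → i ≤ j → j ≤ N →
    ‖restr (B.Γs n) (c i)‖ ≤ ‖restr (B.Γs n) (c j)‖
  apply_self : ∀ i, 1 ≤ i → i ≤ N → T i (c i) ∈ B.D n ∧
    restr (B.Γs n) (T i (c i)) = trunc (‖restr (B.Γs n) (c i)‖ - 1) (restr (B.Γs n) (c i))
  apply_of_ne : ∀ i, 1 ≤ i → i ≤ N → ∀ z ∈ B.Mi n c i, z ≠ c i → T i z = z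

namespace IsRetractionSeq

variable {B : BD Γ} {n N : ℕ} {c : ℕ → Linf Γ} {T : ℕ → Linf Γ → Linf Γ}

lemma D_eq (h : B.IsRetractionSeq n N c T) : B.D n = B.Mi n c N := by
  rw [D, Mi, h.image_eq]

lemma mem_C (h : B.IsRetractionSeq n N c T) {j : ℕ} (hj : 1 ≤ j) (hjN : j ≤ N) : c j ∈ B.C n :=
  h.image_eq ▸ mem_image_of_mem c ⟨hj, hjN⟩

lemma s_lt_norm_restr (hn : 1 ≤ n) (h : B.IsRetractionSeq n N c T) {j : ℕ} (hj : 1 ≤ j)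
    (hjN : j ≤ N) : B.s n < ‖restr (B.Γs n) (c j)‖ :=
  (B.eq_cMap_restr_of_mem_C hn (h.mem_C hj hjN)).2

lemma norm_restr_sub_one_nonneg (hn : 1 ≤ n) (h : B.IsRetractionSeq n N c T) {j : ℕ}
    (hj : 1 ≤ j) (hjN : j ≤ N) : 0 ≤ ‖restr (B.Γs n) (c j)‖ - 1 := by
  linarith [h.s_lt_norm_restr hn hj hjN, B.one_le_s n]

lemma norm_restr_le_of_mem_Mi (hn : 1 ≤ n) (h : B.IsRetractionSeq n N c T) {a : ℕ} (ha : a < N)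
    {w : Linf Γ} (hw : w ∈ B.Mi n c a) :
    ‖restr (B.Γs n) w‖ ≤ ‖restr (B.Γs n) (c (a + 1))‖ := by
  rcases hw with hw | ⟨k, ⟨hk, hka⟩, rfl⟩
  · exact (B.norm_restr_le_s_of_mem_M hn hw).trans (h.s_lt_norm_restr hn (by omega) ha).le
  · exact h.norm_restr_mono k (a + 1) hk (by omega) ha

lemma apply_mem_Mi (hn : 1 ≤ n) (h : B.IsRetractionSeq n N c T) {a : ℕ} (ha : a < N)
    {w : Linf Γ} (hw : w ∈ B.Mi n c (a + 1)) : T (a + 1) w ∈ B.Mi n c a := by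
  by_cases hwc : w = c (a + 1)
  · subst hwc
    obtain ⟨hD, hr⟩ := h.apply_self (a + 1) (by omega) ha
    rw [h.D_eq] at hD
    rcases hD with hM | ⟨k, hk, hck⟩
    · exact Or.inl hM
    refine Or.inr ⟨k, ⟨hk.1, ?_⟩, hck⟩
    by_contra! hak
    -- `T_{a+1}` lowers the norm on `Γ_n` below that of `c_{a+1}`, hence below that of `c_k`
    have hk_le : ‖restr (B.Γs n) (c k)‖ ≤ ‖restr (B.Γs n) (c (a + 1))‖ - 1 := by
      rw [hck, hr, norm_trunc (h.norm_restr_sub_one_nonneg hn (by omega) ha)]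
      exact min_le_left _ _
    linarith [h.norm_restr_mono (a + 1) k (by omega) hak hk.2]
  · rw [h.apply_of_ne (a + 1) (by omega) ha w hw hwc]
    rcases hw with hM | ⟨k, hk, rfl⟩
    · exact Or.inl hM
    · exact Or.inr ⟨k, ⟨hk.1, by grind⟩, rfl⟩

lemma chain_mem_Mi (hn : 1 ≤ n) (h : B.IsRetractionSeq n N c T) {a : ℕ} (ha : a ≤ N)
    {z : Linf Γ} (hz : z ∈ B.D n) : chain T a N z ∈ B.Mi n c a := by
  induction ha using Nat.decreasingInduction with
  | self => rwa [chain_self, id, ← h.D_eq]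
  | of_succ a ha ih =>
    rw [chain_eq_comp T ha, Function.comp_apply]
    exact h.apply_mem_Mi hn ha ih

lemma chain_mem_D (hn : 1 ≤ n) (h : B.IsRetractionSeq n N c T) {a : ℕ} (ha : a ≤ N)
    {z : Linf Γ} (hz : z ∈ B.D n) : chain T a N z ∈ B.D n :=
  h.D_eq ▸ B.Mi_mono n c ha (h.chain_mem_Mi hn ha hz)

lemma exists_restr_chain_eq_trunc (hn : 1 ≤ n) (h : B.IsRetractionSeq n N c T) {a : ℕ}
    (ha : a ≤ N) {z : Linf Γ} (hz : z ∈ B.D n) :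
    ∃ e, 0 ≤ e ∧ restr (B.Γs n) (chain T a N z) = trunc e (restr (B.Γs n) z) ∧
      (e = ‖restr (B.Γs n) z‖ ∨ ∃ j, a < j ∧ j ≤ N ∧ e = ‖restr (B.Γs n) (c j)‖ - 1) := by
  induction ha using Nat.decreasingInduction with
  | self =>
    exact ⟨_, norm_nonneg _, by rw [chain_self, id, trunc_eq_self le_rfl], Or.inl rfl⟩
  | of_succ a ha ih =>
    obtain ⟨e, he, hre, hlevel⟩ := ih
    have hlevel' : e = ‖restr (B.Γs n) z‖ ∨
        ∃ j, a < j ∧ j ≤ N ∧ e = ‖restr (B.Γs n) (c j)‖ - 1 := by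
      rcases hlevel with hez | ⟨j, hj, hjN, hje⟩
      exacts [Or.inl hez, Or.inr ⟨j, by omega, hjN, hje⟩]
    rw [chain_eq_comp T ha, Function.comp_apply]
    by_cases hwc : chain T (a + 1) N z = c (a + 1)
    · have hL := h.norm_restr_sub_one_nonneg hn (by omega) ha
      refine ⟨min (‖restr (B.Γs n) (c (a + 1))‖ - 1) e, le_min hL he, ?_, ?_⟩
      · calc restr (B.Γs n) (T (a + 1) (chain T (a + 1) N z))
            = trunc (‖restr (B.Γs n) (c (a + 1))‖ - 1) (restr (B.Γs n) (chain T (a + 1) N z)) := by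
              rw [hwc]; exact (h.apply_self (a + 1) (by omega) ha).2
          _ = _ := by rw [hre, trunc_trunc hL he]
      · rcases min_choice (‖restr (B.Γs n) (c (a + 1))‖ - 1) e with hm | hm <;> rw [hm]
        · exact Or.inr ⟨a + 1, by omega, ha, rfl⟩
        · exact hlevel'
    · rw [h.apply_of_ne (a + 1) (by omega) ha _ (h.chain_mem_Mi hn ha hz) hwc]
      exact ⟨e, he, hre, hlevel'⟩

lemma restr_chain_eq_trunc_norm_and_bounds (hn : 1 ≤ n) (h : B.IsRetractionSeq n N c T) {i : ℕ}
    (hi : i < N) {z : Linf Γ} (hz : z ∈ B.D n) :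
    restr (B.Γs n) (chain T i N z) =
        trunc ‖restr (B.Γs n) (chain T i N z)‖ (restr (B.Γs n) z) ∧
      min (‖restr (B.Γs n) (c (i + 1))‖ - 1) ‖restr (B.Γs n) z‖ ≤
        ‖restr (B.Γs n) (chain T i N z)‖ ∧
      ‖restr (B.Γs n) (chain T i N z)‖ ≤
        min ‖restr (B.Γs n) (c (i + 1))‖ ‖restr (B.Γs n) z‖ := by
  obtain ⟨e, he, hre, hlevel⟩ := h.exists_restr_chain_eq_trunc hn hi.le hz
  have hnorm : ‖restr (B.Γs n) (chain T i N z)‖ = min e ‖restr (B.Γs n) z‖ := by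
    rw [hre, norm_trunc he]
  refine ⟨by rw [hre, trunc_norm_trunc he], ?_, le_min ?_ ?_⟩
  · rw [hnorm]
    rcases hlevel with rfl | ⟨j, hj, hjN, rfl⟩
    · exact le_min (min_le_right _ _) (min_le_right _ _)
    · exact min_le_min_right _ (by linarith [h.norm_restr_mono (i + 1) j (by omega) hj hjN])
  · exact h.norm_restr_le_of_mem_Mi hn hi (h.chain_mem_Mi hn hi.le hz)
  · exact hnorm ▸ min_le_right _ _

lemma norm_restr_chain_sub_le (hn : 1 ≤ n) (h : B.IsRetractionSeq n N c T) {i : ℕ}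
    (hi : i < N) {x y : Linf Γ} (hx : x ∈ B.D n) (hy : y ∈ B.D n) :
    ‖restr (B.Γs n) (chain T i N x) - restr (B.Γs n) (chain T i N y)‖ ≤
      max ‖restr (B.Γs n) x - restr (B.Γs n) y‖ 1 := by
  obtain ⟨hx₁, hx₂, hx₃⟩ := h.restr_chain_eq_trunc_norm_and_bounds hn hi hx
  obtain ⟨hy₁, hy₂, hy₃⟩ := h.restr_chain_eq_trunc_norm_and_bounds hn hi hy
  rw [hx₁, hy₁]
  refine (norm_trunc_sub_trunc_le_max (norm_nonneg _) (norm_nonneg _) _ _).trans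
    (max_le (le_max_left _ _) ?_)
  exact (abs_sub_le_max_one_of_min_le hx₂ hx₃ hy₂ hy₃).trans
    (max_le_max (abs_norm_sub_norm_le _ _) le_rfl)

end IsRetractionSeq

end BD

theorem phi_ni_lipschitz_general (B : BD Γ) (n : ℕ) (hn : 1 ≤ n)
    (N : ℕ) (c : ℕ → Linf Γ)
    (hc_range : c '' Set.Icc 1 N = B.C n)
    (hc_mono : ∀ i j, 1 ≤ i → i ≤ j → j ≤ N →
      ‖restr (B.Γs n) (c i)‖ ≤ ‖restr (B.Γs n) (c j)‖)
    (T : ℕ → Linf Γ → Linf Γ)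
    (hT_val : ∀ i, 1 ≤ i → i ≤ N → T i (c i) ∈ B.D n ∧
      restr (B.Γs n) (T i (c i)) =
        trunc (‖restr (B.Γs n) (c i)‖ - 1) (restr (B.Γs n) (c i)))
    (hT_id : ∀ i, 1 ≤ i → i ≤ N →
      ∀ z ∈ B.M n ∪ c '' Set.Icc 1 i, z ≠ c i → T i z = z)
    : ∀ i, i < N → ∀ x ∈ B.D n, ∀ y ∈ B.D n,
      ‖chain T i N x - chain T i N y‖ ≤
        (2 * (B.lam : ℝ) ^ 2 + 4 * (B.lam : ℝ) + 4) * ‖x - y‖ := by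
  intro i hi x hx y hy
  have h : B.IsRetractionSeq n N c T := ⟨hc_range, hc_mono, hT_val, hT_id⟩
  rcases eq_or_ne x y with rfl | hxy
  · simp
  have hsep : 1 ≤ ‖x - y‖ := by
    obtain ⟨u, rfl⟩ := B.D_subset_range_quant hn hx
    obtain ⟨v, rfl⟩ := B.D_subset_range_quant hn hy
    exact one_le_norm_quant_sub_quant hxy
  have hrestr : ‖restr (B.Γs n) (chain T i N x) - restr (B.Γs n) (chain T i N y)‖ ≤ ‖x - y‖ :=
    (h.norm_restr_chain_sub_le hn hi hx hy).trans (max_le (norm_restr_sub_restr_le _ _ _) hsep)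
  have hlam := B.one_le_lam_real
  calc ‖chain T i N x - chain T i N y‖
      ≤ B.lam ^ 2 * ‖restr (B.Γs n) (chain T i N x) - restr (B.Γs n) (chain T i N y)‖ +
          (B.lam ^ 2 + B.lam + 2) :=
        B.norm_sub_le_of_mem_D hn (h.chain_mem_D hn hi.le hx) (h.chain_mem_D hn hi.le hy)
    _ ≤ B.lam ^ 2 * ‖x - y‖ + (B.lam ^ 2 + B.lam + 2) * ‖x - y‖ := by
        gcongr
        exact le_mul_of_one_le_right (by positivity) hsep
    _ ≤ (2 * (B.lam : ℝ) ^ 2 + 4 * (B.lam : ℝ) + 4) * ‖x - y‖ := by nlinarith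

/-- Proposition (Step 4): every `φ_{n,i}` is `(2λ²+4λ+4)`-Lipschitz on `D_n`. -/
theorem phi_ni_lipschitz (B : BD Γ) (n : ℕ) (hn : 1 ≤ n)
    (N : ℕ) (c : ℕ → Linf Γ)
    (hc_inj : Set.InjOn c (Set.Icc 1 N))
    (hc_range : c '' Set.Icc 1 N = B.C n)
    (hc_mono : ∀ i j, 1 ≤ i → i ≤ j → j ≤ N →
      ‖restr (B.Γs n) (c i)‖ ≤ ‖restr (B.Γs n) (c j)‖)
    (T : ℕ → Linf Γ → Linf Γ)
    (hT_val : ∀ i, 1 ≤ i → i ≤ N → T i (c i) ∈ B.D n ∧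
      restr (B.Γs n) (T i (c i)) =
        trunc (‖restr (B.Γs n) (c i)‖ - 1) (restr (B.Γs n) (c i)))
    (hT_id : ∀ i, 1 ≤ i → i ≤ N →
      ∀ z ∈ B.M n ∪ c '' Set.Icc 1 i, z ≠ c i → T i z = z)
    : ∀ i, i < N → ∀ x ∈ B.D n, ∀ y ∈ B.D n,
      ‖chain T i N x - chain T i N y‖ ≤
        (2 * (B.lam : ℝ) ^ 2 + 4 * (B.lam : ℝ) + 4) * ‖x - y‖ :=
  phi_ni_lipschitz_general B n hn N c hc_range hc_mono T hT_val hT_id
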